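/- Let f^co and f^tx be probability density functions on [0, ∞) with cumulative distribution functions F^co and F^tx, fix a ≥ 0 with F^co(a) < 1, and let f be the density of Parametrization 2: f(t) = f^co(t) for t < a and f(t) = f^tx(t − a)·(1 − F^co(a)) for t ≥ a. Then for every t ≥ a with F^tx(t − a) < 1, the hazard function of f satisfies h(t) := f(t) / (1 − ∫₀^t f(s) ds) = f^tx(t − a) / (1 − F^tx(t − a)) = h^tx(t − a). That is, under Parametrization 2 the post-adoption hazard equals the treatment hazard evaluated at time since adoption t − a. -/
import Mathlib


open MeasureTheory

/-- Under Parametrization 2,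
`f(t) = f^co(t)` for `t < a`, `f(t) = f^tx(t − a)·(1 − F^co(a))` for `t ≥ a`
(with `F^co(a) < 1`), the post-adoption hazard equals the treatment hazard at time since
adoption: for all `t ≥ a` with `F^tx(t − a) < 1`,
`f(t)/(1 − ∫₀^t f) = f^tx(t − a)/(1 − F^tx(t − a)) = h^tx(t − a)`. -/
theorem parametrization_two_hazard
    (fco ftx : ℝ → ℝ)
    (hco_nn : ∀ t ∈ Set.Ici (0:ℝ), 0 ≤ fco t)
    (htx_nn : ∀ t ∈ Set.Ici (0:ℝ), 0 ≤ ftx t)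
    (hco_int : IntegrableOn fco (Set.Ici 0))
    (htx_int : IntegrableOn ftx (Set.Ici 0))
    (hco_one : (∫ t in Set.Ici (0:ℝ), fco t) = 1)
    (htx_one : (∫ t in Set.Ici (0:ℝ), ftx t) = 1)
    (a : ℝ) (ha : 0 ≤ a)
    (hFco_lt_one : (∫ s in Set.Icc (0:ℝ) a, fco s) < 1) :
    ∀ t : ℝ, a ≤ t → (∫ s in Set.Icc (0:ℝ) (t - a), ftx s) < 1 →
      (if t < a then fco t
       else ftx (t - a) * (1 - ∫ u in Set.Icc (0:ℝ) a, fco u))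
        / (1 - ∫ s in Set.Icc (0:ℝ) t,
            (if s < a then fco s
             else ftx (s - a) * (1 - ∫ u in Set.Icc (0:ℝ) a, fco u)))
      = ftx (t - a) / (1 - ∫ s in Set.Icc (0:ℝ) (t - a), ftx s) := by
  intro t hat hFtx
  set c : ℝ := ∫ u in Set.Icc (0:ℝ) a, fco u with hc
  set d : ℝ := ∫ s in Set.Icc (0:ℝ) (t - a), ftx s with hd
  set g : ℝ → ℝ := fun s => if s < a then fco s else ftx (s - a) * (1 - c) with hg
  have h0t : (0:ℝ) ≤ t := le_trans ha hat
  have h0ta : (0:ℝ) ≤ t - a := sub_nonneg.2 hat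
  -- integrability pieces
  have hne : ∀ᵐ s : ℝ, s ≠ a := by
    have : volume ({a} : Set ℝ) = 0 := measure_singleton a
    simpa [ae_iff] using this
  have hco_Ioc : IntegrableOn fco (Set.Ioc 0 a) :=
    hco_int.mono_set (fun x hx => hx.1.le)
  have hg_Ioc0a : IntegrableOn g (Set.Ioc 0 a) := by
    refine hco_Ioc.congr ?_
    refine (ae_restrict_iff' measurableSet_Ioc).2 ?_
    filter_upwards [hne] with s hs hmem
    have : s < a := lt_of_le_of_ne hmem.2 hs
    simp [hg, this]
  have htx_shift : IntegrableOn (fun s => ftx (s - a) * (1 - c)) (Set.Ioc a t) := by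
    have h1 : IntegrableOn ftx (Set.Ioc 0 (t - a)) :=
      htx_int.mono_set (fun x hx => hx.1.le)
    have h2 : IntervalIntegrable ftx volume 0 (t - a) :=
      (intervalIntegrable_iff_integrableOn_Ioc_of_le h0ta).2 h1
    have h3 : IntervalIntegrable (fun s => ftx (s - a)) volume a t := by
      simpa using h2.comp_sub_right a
    have h4 := ((intervalIntegrable_iff_integrableOn_Ioc_of_le hat).1 h3)
    exact h4.mul_const _
  have hg_Iocat : IntegrableOn g (Set.Ioc a t) := by
    refine htx_shift.congr ?_
    refine (ae_restrict_iff' measurableSet_Ioc).2 ?_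
    filter_upwards with s hmem
    have : ¬ s < a := not_lt.2 hmem.1.le
    simp [hg, this]
  have hgi1 : IntervalIntegrable g volume 0 a :=
    (intervalIntegrable_iff_integrableOn_Ioc_of_le ha).2 hg_Ioc0a
  have hgi2 : IntervalIntegrable g volume a t :=
    (intervalIntegrable_iff_integrableOn_Ioc_of_le hat).2 hg_Iocat
  -- compute the integral of g over Icc 0 t
  have hsplit : (∫ s in Set.Icc (0:ℝ) t, g s) = c + d * (1 - c) := by
    have e0 : (∫ s in Set.Icc (0:ℝ) t, g s) = ∫ s in (0:ℝ)..t, g s := by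
      rw [intervalIntegral.integral_of_le h0t, integral_Icc_eq_integral_Ioc]
    have e1 : (∫ s in (0:ℝ)..t, g s)
        = (∫ s in (0:ℝ)..a, g s) + ∫ s in a..t, g s :=
      (intervalIntegral.integral_add_adjacent_intervals hgi1 hgi2).symm
    have e2 : (∫ s in (0:ℝ)..a, g s) = c := by
      rw [intervalIntegral.integral_of_le ha]
      rw [hc, integral_Icc_eq_integral_Ioc]
      refine setIntegral_congr_ae measurableSet_Ioc ?_
      filter_upwards [hne] with s hs hmem
      have : s < a := lt_of_le_of_ne hmem.2 hs
      simp [hg, this]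
    have e3 : (∫ s in a..t, g s) = d * (1 - c) := by
      have e3a : (∫ s in a..t, g s) = ∫ s in a..t, ftx (s - a) * (1 - c) := by
        rw [intervalIntegral.integral_of_le hat, intervalIntegral.integral_of_le hat]
        refine setIntegral_congr_ae measurableSet_Ioc ?_
        filter_upwards with s hmem
        have : ¬ s < a := not_lt.2 hmem.1.le
        simp [hg, this]
      rw [e3a, intervalIntegral.integral_mul_const,
        intervalIntegral.integral_comp_sub_right ftx a]
      simp only [sub_self]
      rw [intervalIntegral.integral_of_le h0ta, hd, integral_Icc_eq_integral_Ioc]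
    rw [e0, e1, e2, e3]
  -- algebra
  have hnt : ¬ t < a := not_lt.2 hat
  have h1c : (0:ℝ) < 1 - c := by linarith
  have h1d : (0:ℝ) < 1 - d := by linarith
  rw [if_neg hnt]
  have : (∫ s in Set.Icc (0:ℝ) t,
      (if s < a then fco s else ftx (s - a) * (1 - c))) = c + d * (1 - c) := hsplit
  rw [this]
  have hden : 1 - (c + d * (1 - c)) = (1 - d) * (1 - c) := by ring
  rw [hden, mul_div_mul_right _ _ (ne_of_gt h1c)]
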